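/- arXiv:2101.07083 — 2 statements merged into one kernel-verified Lean document; each statement's English description precedes it below -/
import Mathlib

section
/- Let g be a Riemannian metric on a surface Σ and let A be a smooth (1,1)-tensor with d^{∇^g}A = 0 such that det A vanishes nowhere. Define h = g(A·,A·). Then the Levi-Civita connections of g and h are related by ∇^h_v w = A^{-1}(∇^g_v(A(w))), and the Gaussian curvatures are related by K_h = K_g / det A. -/
noncomputable section

open Matrix

/-! ### Coordinate differential geometry on the plane `ℂ ≅ ℝ²`

We develop, in a fixed coordinate chart (an open subset of `ℂ`), the classical
coordinate expressions for Riemannian metrics (as matrix-valued fields),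
Christoffel symbols, covariant derivatives of `(1,1)`-tensors, the Codazzi
condition `d^∇A = 0`, the Riemann curvature tensor, the Gaussian curvature and
the Laplace–Beltrami operator. -/

/-- The two real coordinate directions of `ℂ` viewed as the plane `ℝ²`. -/
def dir : Fin 2 → ℂ := ![1, Complex.I]

/-- The two real coordinate functions of `ℂ`. -/
def coordC : Fin 2 → ℂ → ℝ := ![Complex.re, Complex.im]

/-- Partial derivative of a real-valued function in the `i`-th coordinate direction. -/
def pd (i : Fin 2) (f : ℂ → ℝ) (z : ℂ) : ℝ := fderiv ℝ f z (dir i)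

/-- Smoothness of a matrix-valued field on a set. -/
def SmoothMatOn (A : ℂ → Matrix (Fin 2) (Fin 2) ℝ) (U : Set ℂ) : Prop :=
  ∀ i j, ContDiffOn ℝ (⊤ : ℕ∞) (fun z => A z i j) U

/-- `g` is (the coordinate expression of) a smooth Riemannian metric on `U ⊆ ℂ`. -/
structure IsMetricOn (g : ℂ → Matrix (Fin 2) (Fin 2) ℝ) (U : Set ℂ) : Prop where
  smooth : SmoothMatOn g U
  symm : ∀ z ∈ U, (g z).IsSymm
  posdef : ∀ z ∈ U, (g z).PosDef

/-- Christoffel symbols `Γ^k_{ij}` of a metric, in coordinates. -/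
def christoffel (g : ℂ → Matrix (Fin 2) (Fin 2) ℝ) (k i j : Fin 2) (z : ℂ) : ℝ :=
  (1/2) * ∑ l, (g z)⁻¹ k l *
    (pd i (fun w => g w j l) z + pd j (fun w => g w i l) z - pd l (fun w => g w i j) z)

/-- Components `(∇_i A)^k_j` of the covariant derivative of a `(1,1)`-tensor field `A`
with respect to the Levi-Civita connection of `g`. -/
def covDeriv11 (g A : ℂ → Matrix (Fin 2) (Fin 2) ℝ) (i k j : Fin 2) (z : ℂ) : ℝ :=
  pd i (fun w => A w k j) z + ∑ l, christoffel g k i l z * A z l j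
    - ∑ l, christoffel g l i j z * A z k l

/-- The Codazzi condition `d^{∇^g}A = 0` on `U`:
`∇_i (A(∂_j)) - ∇_j (A(∂_i)) = 0` for all coordinate directions. -/
def IsCodazziOn (g A : ℂ → Matrix (Fin 2) (Fin 2) ℝ) (U : Set ℂ) : Prop :=
  ∀ z ∈ U, ∀ i j k, covDeriv11 g A i k j z = covDeriv11 g A j k i z

/-- Components `R^l_{ijk}` of the Riemann curvature tensor,
`R(∂_i,∂_j)∂_k = R^l_{ijk} ∂_l`. -/
def riem (g : ℂ → Matrix (Fin 2) (Fin 2) ℝ) (l i j k : Fin 2) (z : ℂ) : ℝ :=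
  pd i (christoffel g l j k) z - pd j (christoffel g l i k) z
    + ∑ m, (christoffel g l i m z * christoffel g m j k z
      - christoffel g l j m z * christoffel g m i k z)

/-- The Gaussian curvature `K_g = ⟨R(∂₀,∂₁)∂₁, ∂₀⟩ / det g` of a metric on a surface. -/
def gaussK (g : ℂ → Matrix (Fin 2) (Fin 2) ℝ) (z : ℂ) : ℝ :=
  (∑ l, g z l 0 * riem g l 0 1 1 z) / (g z).det

/-- The Laplace–Beltrami operator of `g` (with negative spectrum convention):
`Δ^g f = (det g)^{-1/2} ∂_i ( (det g)^{1/2} g^{ij} ∂_j f )`. -/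
def laplace (g : ℂ → Matrix (Fin 2) (Fin 2) ℝ) (f : ℂ → ℝ) (z : ℂ) : ℝ :=
  (Real.sqrt (g z).det)⁻¹ *
    ∑ i, pd i (fun w => Real.sqrt (g w).det * ∑ j, (g w)⁻¹ i j * pd j f w) z

/-- The Jacobian matrix of a map `ψ : ℂ → ℂ` (as a map of the plane) at `z`. -/
def jacobianMat (ψ : ℂ → ℂ) (z : ℂ) : Matrix (Fin 2) (Fin 2) ℝ :=
  Matrix.of fun a b => coordC a (fderiv ℝ ψ z (dir b))

/-- Coordinate expression of the pullback metric `ψ*g`. -/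
def pullbackMetric (ψ : ℂ → ℂ) (g : ℂ → Matrix (Fin 2) (Fin 2) ℝ) (z : ℂ) :
    Matrix (Fin 2) (Fin 2) ℝ :=
  (jacobianMat ψ z)ᵀ * g (ψ z) * jacobianMat ψ z

end
noncomputable section

open Matrix

/-- Components `(∇_X Y)^k` of the covariant derivative of a vector field `Y`
along a vector field `X`, for the Levi-Civita connection of `g`. -/
def covVec (g : ℂ → Matrix (Fin 2) (Fin 2) ℝ) (X Y : ℂ → Fin 2 → ℝ) (k : Fin 2) (z : ℂ) : ℝ :=
  ∑ i, X z i * (pd i (fun w => Y w k) z + ∑ j, christoffel g k i j z * Y z j)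

open scoped ContDiff

/-! Write `Γ_i` for the matrix `(Γ^k_{ij})_{k,j}` of `∇^g_{∂_i}`. The connection `A⁻¹ ∇^g A` has
Christoffel matrices `A⁻¹ (∂_i A + Γ_i A)`; it is torsion-free because `A` is Codazzi, and it
preserves `h = Aᵀ g A` because `∇^g` preserves `g`. By the Koszul formula it is therefore `∇^h`.
Its curvature is `A⁻¹ R^g A`, so the lowered curvature of `h` is `Aᵀ (g R^g) A`. Since
`g R^g(∂₀, ∂₁)` is a skew-symmetric `2 × 2` matrix, conjugating it by `A` multiplies it by
`det A`, while `det h = (det A)² det g`. -/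

section Calculus

variable {U : Set ℂ} {f f' : ℂ → ℝ} {z : ℂ}

theorem pd_congr_on (hU : IsOpen U) (hz : z ∈ U) (h : ∀ w ∈ U, f w = f' w) (i : Fin 2) :
    pd i f z = pd i f' z := by
  rw [pd, pd, Filter.EventuallyEq.fderiv_eq (Filter.eventuallyEq_of_mem (hU.mem_nhds hz) h)]

theorem pd_add (hf : DifferentiableAt ℝ f z) (hf' : DifferentiableAt ℝ f' z) (i : Fin 2) :
    pd i (fun w => f w + f' w) z = pd i f z + pd i f' z := by
  simp [pd, fderiv_fun_add hf hf']

theorem pd_mul (hf : DifferentiableAt ℝ f z) (hf' : DifferentiableAt ℝ f' z) (i : Fin 2) :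
    pd i (fun w => f w * f' w) z = pd i f z * f' z + f z * pd i f' z := by
  simp only [pd, fderiv_fun_mul hf hf', _root_.add_apply, _root_.smul_apply, smul_eq_mul]
  ring

theorem pd_sum {ι : Type*} (s : Finset ι) {F : ι → ℂ → ℝ}
    (hF : ∀ a ∈ s, DifferentiableAt ℝ (F a) z) (i : Fin 2) :
    pd i (fun w => ∑ a ∈ s, F a w) z = ∑ a ∈ s, pd i (F a) z := by
  simp [pd, fderiv_fun_sum hF]

theorem pd_pd_comm (hf : ContDiffAt ℝ 2 f z) (i j : Fin 2) :
    pd i (pd j f) z = pd j (pd i f) z := by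
  have hdiff : DifferentiableAt ℝ (fderiv ℝ f) z :=
    (hf.fderiv_right (m := 1) le_rfl).differentiableAt one_ne_zero
  have hsnd (a b : Fin 2) : pd a (pd b f) z = fderiv ℝ (fderiv ℝ f) z (dir a) (dir b) := by
    change fderiv ℝ (fun w => fderiv ℝ f w (dir b)) z (dir a) = _
    simp [fderiv_clm_apply hdiff (differentiableAt_const _)]
  rw [hsnd, hsnd, hf.isSymmSndFDerivAt (by simp)]

theorem ContDiffOn.pd (hf : ContDiffOn ℝ ∞ f U) (hU : IsOpen U) (i : Fin 2) :
    ContDiffOn ℝ ∞ (pd i f) U :=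
  (hf.fderiv_of_isOpen hU le_rfl).clm_apply contDiffOn_const

end Calculus

section MatrixFields

def pdMat (i : Fin 2) (M : ℂ → Matrix (Fin 2) (Fin 2) ℝ) (z : ℂ) : Matrix (Fin 2) (Fin 2) ℝ :=
  Matrix.of fun a b => pd i (fun w => M w a b) z

@[simp]
theorem pdMat_apply (i : Fin 2) (M : ℂ → Matrix (Fin 2) (Fin 2) ℝ) (z : ℂ) (a b : Fin 2) :
    pdMat i M z a b = pd i (fun w => M w a b) z := rfl

variable {U : Set ℂ} {M N : ℂ → Matrix (Fin 2) (Fin 2) ℝ} {z : ℂ}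

theorem SmoothMatOn.contDiffAt (hM : SmoothMatOn M U) (hU : IsOpen U) (hz : z ∈ U)
    (a b : Fin 2) : ContDiffAt ℝ ∞ (fun w => M w a b) z :=
  (hM a b).contDiffAt (hU.mem_nhds hz)

theorem SmoothMatOn.differentiableAt (hM : SmoothMatOn M U) (hU : IsOpen U) (hz : z ∈ U)
    (a b : Fin 2) : DifferentiableAt ℝ (fun w => M w a b) z :=
  (hM.contDiffAt hU hz a b).differentiableAt (by simp)

theorem SmoothMatOn.mul (hM : SmoothMatOn M U) (hN : SmoothMatOn N U) :
    SmoothMatOn (fun w => M w * N w) U := fun a b => by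
  simp only [Matrix.mul_apply]
  exact ContDiffOn.sum fun c _ => (hM a c).mul (hN c b)

theorem SmoothMatOn.transpose (hM : SmoothMatOn M U) : SmoothMatOn (fun w => (M w)ᵀ) U :=
  fun a b => hM b a

theorem SmoothMatOn.pdMat (hM : SmoothMatOn M U) (hU : IsOpen U) (i : Fin 2) :
    SmoothMatOn (pdMat i M) U := fun a b => (hM a b).pd hU i

theorem SmoothMatOn.inv (hM : SmoothMatOn M U) (hdet : ∀ w ∈ U, (M w).det ≠ 0) :
    SmoothMatOn (fun w => (M w)⁻¹) U := by
  have hdet' : ContDiffOn ℝ ∞ (fun w => (M w).det) U := by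
    simp only [Matrix.det_fin_two]
    exact ((hM 0 0).mul (hM 1 1)).sub ((hM 0 1).mul (hM 1 0))
  intro a b
  simp only [Matrix.inv_def, Ring.inverse_eq_inv', Matrix.smul_apply, smul_eq_mul]
  refine (hdet'.inv hdet).mul ?_
  fin_cases a <;> fin_cases b <;>
    simp [Matrix.adjugate_fin_two, hM 0 0, hM 1 1, (hM 0 1).neg, (hM 1 0).neg]

theorem pdMat_congr_on (hU : IsOpen U) (hz : z ∈ U) (h : ∀ w ∈ U, M w = N w) (i : Fin 2) :
    pdMat i M z = pdMat i N z := by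
  ext a b
  exact pd_congr_on hU hz (fun w hw => by rw [h w hw]) i

theorem pdMat_transpose (i : Fin 2) : pdMat i (fun w => (M w)ᵀ) z = (pdMat i M z)ᵀ := rfl

theorem pdMat_add (hM : ∀ a b, DifferentiableAt ℝ (fun w => M w a b) z)
    (hN : ∀ a b, DifferentiableAt ℝ (fun w => N w a b) z) (i : Fin 2) :
    pdMat i (fun w => M w + N w) z = pdMat i M z + pdMat i N z := by
  ext a b
  exact pd_add (hM a b) (hN a b) i

theorem pdMat_mul (hM : ∀ a b, DifferentiableAt ℝ (fun w => M w a b) z)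
    (hN : ∀ a b, DifferentiableAt ℝ (fun w => N w a b) z) (i : Fin 2) :
    pdMat i (fun w => M w * N w) z = pdMat i M z * N z + M z * pdMat i N z := by
  ext a b
  simp only [pdMat, Matrix.mul_apply, Matrix.add_apply, Matrix.of_apply]
  rw [pd_sum _ fun c _ => (hM a c).fun_mul (hN c b), ← Finset.sum_add_distrib]
  exact Finset.sum_congr rfl fun c _ => pd_mul (hM a c) (hN c b) i

theorem pdMat_pdMat_comm (hM : SmoothMatOn M U) (hU : IsOpen U) (hz : z ∈ U) (i j : Fin 2) :
    pdMat i (pdMat j M) z = pdMat j (pdMat i M) z := by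
  ext a b
  exact pd_pd_comm ((hM.contDiffAt hU hz a b).of_le ENat.LEInfty.out) i j

end MatrixFields

section LeviCivita

def christoffelMat (g : ℂ → Matrix (Fin 2) (Fin 2) ℝ) (i : Fin 2) (z : ℂ) :
    Matrix (Fin 2) (Fin 2) ℝ :=
  Matrix.of fun k j => christoffel g k i j z

@[simp]
theorem christoffelMat_apply (g : ℂ → Matrix (Fin 2) (Fin 2) ℝ) (i k j : Fin 2) (z : ℂ) :
    christoffelMat g i z k j = christoffel g k i j z := rfl

variable {U : Set ℂ} {g : ℂ → Matrix (Fin 2) (Fin 2) ℝ} {z : ℂ}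

theorem IsMetricOn.det_ne_zero (hg : IsMetricOn g U) (hz : z ∈ U) : (g z).det ≠ 0 :=
  (hg.posdef z hz).det_pos.ne'

theorem christoffel_comm (hU : IsOpen U) (hsymm : ∀ w ∈ U, (g w).IsSymm) (hz : z ∈ U)
    (k i j : Fin 2) : christoffel g k i j z = christoffel g k j i z := by
  have hpd (l : Fin 2) : pd l (fun w => g w i j) z = pd l (fun w => g w j i) z :=
    pd_congr_on hU hz (fun w hw => (hsymm w hw).apply j i) l
  simp only [christoffel, hpd]
  congr 2
  ext l
  ring

theorem SmoothMatOn.christoffelMat (hg : SmoothMatOn g U) (hU : IsOpen U)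
    (hdet : ∀ w ∈ U, (g w).det ≠ 0) (i : Fin 2) : SmoothMatOn (christoffelMat g i) U :=
  fun k j => by
    simp only [christoffelMat_apply, christoffel]
    exact contDiffOn_const.mul <| ContDiffOn.sum fun l _ => (hg.inv hdet k l).mul <|
      (((hg.pdMat hU i) j l).add ((hg.pdMat hU j) i l)).sub ((hg.pdMat hU l) i j)

theorem sum_christoffel_mul (hsymm : (g z).IsSymm) (hdet : (g z).det ≠ 0) (i a b : Fin 2) :
    ∑ l, christoffel g l i a z * g z l b =
      (pd i (fun w => g w a b) z + pd a (fun w => g w i b) z - pd b (fun w => g w i a) z) / 2 := by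
  set K : Fin 2 → ℝ := fun p =>
    pd i (fun w => g w a p) z + pd a (fun w => g w i p) z - pd p (fun w => g w i a) z
  calc ∑ l, christoffel g l i a z * g z l b
      = (∑ p, (g z * (g z)⁻¹) b p * K p) / 2 := by
        simp only [christoffel, Matrix.mul_apply, Finset.sum_mul, Finset.mul_sum, Finset.sum_div]
        rw [Finset.sum_comm]
        refine Finset.sum_congr rfl fun p _ => Finset.sum_congr rfl fun l _ => ?_
        rw [hsymm.apply l b]
        ring
    _ = K b / 2 := by
        simp [Matrix.mul_nonsing_inv _ (isUnit_iff_ne_zero.mpr hdet), Matrix.one_apply]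

theorem IsMetricOn.pdMat_eq_christoffelMat (hg : IsMetricOn g U) (hU : IsOpen U) (hz : z ∈ U)
    (i : Fin 2) :
    pdMat i g z = (christoffelMat g i z)ᵀ * g z + g z * christoffelMat g i z := by
  ext a b
  have hab : pd i (fun w => g w b a) z = pd i (fun w => g w a b) z :=
    pd_congr_on hU hz (fun w hw => (hg.symm w hw).apply a b) i
  have hlower := sum_christoffel_mul (hg.symm z hz) (hg.det_ne_zero hz) i
  simp only [pdMat_apply, christoffelMat_apply, Matrix.add_apply, Matrix.mul_apply,
    Matrix.transpose_apply, hlower]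
  rw [Finset.sum_congr rfl fun l _ => by rw [mul_comm, (hg.symm z hz).apply l a], hlower, hab]
  ring

/-- Uniqueness of the Levi-Civita connection: `hG` says that `G` is torsion-free and `hcompat`
that it preserves `m`. -/
theorem christoffelMat_eq_of_compat {m : ℂ → Matrix (Fin 2) (Fin 2) ℝ}
    (hsymm : (m z).IsSymm) (hdet : (m z).det ≠ 0) (G : Fin 2 → Matrix (Fin 2) (Fin 2) ℝ)
    (hG : ∀ i j k, G i k j = G j k i) (hcompat : ∀ i, pdMat i m z = (G i)ᵀ * m z + m z * G i)
    (i : Fin 2) : christoffelMat m i z = G i := by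
  have hpd (i a b : Fin 2) : pd i (fun w => m w a b) z = ((G i)ᵀ * m z + m z * G i) a b :=
    congrFun (congrFun (hcompat i) a) b
  ext k j
  have koszul (l : Fin 2) : pd i (fun w => m w j l) z + pd j (fun w => m w i l) z
      - pd l (fun w => m w i j) z = 2 * (m z * G i) l j := by
    simp only [hpd, Matrix.add_apply, Matrix.mul_apply, Matrix.transpose_apply, Finset.mul_sum,
      ← Finset.sum_add_distrib, ← Finset.sum_sub_distrib]
    refine Finset.sum_congr rfl fun p _ => ?_
    rw [hG j i p, hG i l p, hG j l p, hsymm.apply p l, hsymm.apply j p]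
    ring
  calc christoffelMat m i z k j = ((m z)⁻¹ * (m z * G i)) k j := by
        simp only [christoffelMat_apply, christoffel, koszul, Matrix.mul_apply (M := (m z)⁻¹),
          Finset.mul_sum]
        refine Finset.sum_congr rfl fun l _ => ?_
        ring
    _ = G i k j := by
        rw [← Matrix.mul_assoc, Matrix.nonsing_inv_mul _ (isUnit_iff_ne_zero.mpr hdet),
          Matrix.one_mul]

end LeviCivita

section Gauge

variable {U : Set ℂ} {g A : ℂ → Matrix (Fin 2) (Fin 2) ℝ} {z : ℂ}

/-- Column `j` of `covDerivMat g A i z` is `∇^g_{∂_i} (A ∂_j)`. -/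
def covDerivMat (g A : ℂ → Matrix (Fin 2) (Fin 2) ℝ) (i : Fin 2) (z : ℂ) :
    Matrix (Fin 2) (Fin 2) ℝ :=
  pdMat i A z + christoffelMat g i z * A z

/-- The Christoffel matrices of the connection `A⁻¹ ∇^g A`. -/
def gaugeChristoffelMat (g A : ℂ → Matrix (Fin 2) (Fin 2) ℝ) (i : Fin 2) (z : ℂ) :
    Matrix (Fin 2) (Fin 2) ℝ :=
  (A z)⁻¹ * covDerivMat g A i z

theorem mul_gaugeChristoffelMat (hdet : (A z).det ≠ 0) (i : Fin 2) :
    A z * gaugeChristoffelMat g A i z = covDerivMat g A i z := by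
  rw [gaugeChristoffelMat, ← Matrix.mul_assoc,
    Matrix.mul_nonsing_inv _ (isUnit_iff_ne_zero.mpr hdet), Matrix.one_mul]

theorem IsCodazziOn.covDerivMat_comm (hA : IsCodazziOn g A U) (hU : IsOpen U)
    (hsymm : ∀ w ∈ U, (g w).IsSymm) (hz : z ∈ U) (i j k : Fin 2) :
    covDerivMat g A i z k j = covDerivMat g A j z k i := by
  have hc := hA z hz i j k
  have hΓ : ∑ l, christoffel g l i j z * A z k l = ∑ l, christoffel g l j i z * A z k l := by
    simp only [christoffel_comm hU hsymm hz _ i j]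
  simp only [covDeriv11] at hc
  simp only [covDerivMat, Matrix.add_apply, Matrix.mul_apply, pdMat_apply, christoffelMat_apply]
  linarith

theorem IsCodazziOn.gaugeChristoffelMat_comm (hA : IsCodazziOn g A U) (hU : IsOpen U)
    (hsymm : ∀ w ∈ U, (g w).IsSymm) (hz : z ∈ U) (i j k : Fin 2) :
    gaugeChristoffelMat g A i z k j = gaugeChristoffelMat g A j z k i := by
  simp only [gaugeChristoffelMat, Matrix.mul_apply, hA.covDerivMat_comm hU hsymm hz i j]

theorem pdMat_transpose_mul_mul (hg : IsMetricOn g U) (hA : SmoothMatOn A U) (hU : IsOpen U)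
    (hdet : (A z).det ≠ 0) (hz : z ∈ U) (i : Fin 2) :
    pdMat i (fun w => (A w)ᵀ * g w * A w) z =
      (gaugeChristoffelMat g A i z)ᵀ * ((A z)ᵀ * g z * A z)
        + (A z)ᵀ * g z * A z * gaugeChristoffelMat g A i z := by
  rw [pdMat_mul ((hA.transpose.mul hg.smooth).differentiableAt hU hz) (hA.differentiableAt hU hz),
    pdMat_mul (hA.transpose.differentiableAt hU hz) (hg.smooth.differentiableAt hU hz),
    pdMat_transpose, hg.pdMat_eq_christoffelMat hU hz,
    Matrix.mul_assoc _ _ (gaugeChristoffelMat g A i z), mul_gaugeChristoffelMat hdet,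
    ← Matrix.mul_assoc, ← Matrix.mul_assoc, ← Matrix.transpose_mul, mul_gaugeChristoffelMat hdet]
  simp only [covDerivMat, Matrix.transpose_add, Matrix.transpose_mul]
  noncomm_ring

theorem christoffelMat_transpose_mul_mul (hg : IsMetricOn g U) (hA : SmoothMatOn A U)
    (hcodazzi : IsCodazziOn g A U) (hU : IsOpen U) (hdet : (A z).det ≠ 0) (hz : z ∈ U)
    (i : Fin 2) :
    christoffelMat (fun w => (A w)ᵀ * g w * A w) i z = gaugeChristoffelMat g A i z := by
  refine christoffelMat_eq_of_compat ?_ ?_ _ (hcodazzi.gaugeChristoffelMat_comm hU hg.symm hz)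
    (pdMat_transpose_mul_mul hg hA hU hdet hz) i
  · simp only [Matrix.IsSymm, Matrix.transpose_mul, Matrix.transpose_transpose, (hg.symm z hz).eq,
      Matrix.mul_assoc]
  · simp [Matrix.det_mul, hdet, hg.det_ne_zero hz]

end Gauge

section CovariantDerivative

variable {U : Set ℂ} {g A M : ℂ → Matrix (Fin 2) (Fin 2) ℝ} {z : ℂ}

def pdVec (i : Fin 2) (Y : ℂ → Fin 2 → ℝ) (z : ℂ) : Fin 2 → ℝ :=
  fun k => pd i (fun w => Y w k) z

theorem pdVec_mulVec {Y : ℂ → Fin 2 → ℝ} (hM : ∀ a b, DifferentiableAt ℝ (fun w => M w a b) z)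
    (hY : ∀ k, DifferentiableAt ℝ (fun w => Y w k) z) (i : Fin 2) :
    pdVec i (fun w => M w *ᵥ Y w) z = pdMat i M z *ᵥ Y z + M z *ᵥ pdVec i Y z := by
  ext k
  simp only [pdVec, Matrix.mulVec, dotProduct, Pi.add_apply, pdMat_apply]
  rw [pd_sum _ fun b _ => (hM k b).fun_mul (hY b), ← Finset.sum_add_distrib]
  exact Finset.sum_congr rfl fun b _ => pd_mul (hM k b) (hY b) i

theorem covVec_eq_sum (X Y : ℂ → Fin 2 → ℝ) :
    (fun k => covVec g X Y k z) = ∑ i, X z i • (pdVec i Y z + christoffelMat g i z *ᵥ Y z) := by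
  ext k
  simp only [covVec, Finset.sum_apply, Pi.smul_apply, Pi.add_apply, smul_eq_mul, pdVec,
    Matrix.mulVec, dotProduct, christoffelMat_apply]

theorem covVec_transpose_mul_mul (hg : IsMetricOn g U) (hA : SmoothMatOn A U)
    (hcodazzi : IsCodazziOn g A U) (hU : IsOpen U) (hdet : (A z).det ≠ 0) (hz : z ∈ U)
    (X Y : ℂ → Fin 2 → ℝ) (hY : ∀ k, DifferentiableAt ℝ (fun w => Y w k) z) :
    (fun k => covVec (fun w => (A w)ᵀ * g w * A w) X Y k z) =
      (A z)⁻¹ *ᵥ fun k => covVec g X (fun w => A w *ᵥ Y w) k z := by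
  simp only [covVec_eq_sum, Matrix.mulVec_sum, Matrix.mulVec_smul,
    pdVec_mulVec (hA.differentiableAt hU hz) hY,
    christoffelMat_transpose_mul_mul hg hA hcodazzi hU hdet hz]
  refine Finset.sum_congr rfl fun i _ => ?_
  simp only [gaugeChristoffelMat, covDerivMat, Matrix.mulVec_add, Matrix.mulVec_mulVec,
    Matrix.add_mulVec, Matrix.mul_add, ← Matrix.mul_assoc,
    Matrix.nonsing_inv_mul _ (isUnit_iff_ne_zero.mpr hdet), Matrix.one_mulVec]
  congr 1
  abel

end CovariantDerivative

section Curvature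

variable {U : Set ℂ} {g A : ℂ → Matrix (Fin 2) (Fin 2) ℝ}
  {Γ Γ' : Fin 2 → ℂ → Matrix (Fin 2) (Fin 2) ℝ} {z : ℂ}

def curvatureMat (Γ : Fin 2 → ℂ → Matrix (Fin 2) (Fin 2) ℝ) (i j : Fin 2) (z : ℂ) :
    Matrix (Fin 2) (Fin 2) ℝ :=
  pdMat i (Γ j) z - pdMat j (Γ i) z + Γ i z * Γ j z - Γ j z * Γ i z

theorem riem_eq_curvatureMat (l i j k : Fin 2) :
    riem g l i j k z = curvatureMat (christoffelMat g) i j z l k := by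
  simp only [riem, curvatureMat, Matrix.add_apply, Matrix.sub_apply, Matrix.mul_apply,
    pdMat_apply, christoffelMat_apply, Finset.sum_sub_distrib]
  ring

theorem gaussK_eq_curvatureMat (g : ℂ → Matrix (Fin 2) (Fin 2) ℝ) (z : ℂ) :
    gaussK g z = ((g z)ᵀ * curvatureMat (christoffelMat g) 0 1 z) 0 1 / (g z).det := by
  simp only [gaussK, Matrix.mul_apply, Matrix.transpose_apply, riem_eq_curvatureMat]

theorem mul_curvatureMat_of_gauge (hU : IsOpen U) (hA : SmoothMatOn A U)
    (hΓ : ∀ i, SmoothMatOn (Γ i) U) (hΓ' : ∀ i, SmoothMatOn (Γ' i) U)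
    (hgauge : ∀ i, ∀ w ∈ U, A w * Γ' i w = pdMat i A w + Γ i w * A w) (hz : z ∈ U)
    (i j : Fin 2) : A z * curvatureMat Γ' i j z = curvatureMat Γ i j z * A z := by
  have hdA := hA.differentiableAt hU hz
  have hpd (i j : Fin 2) : A z * pdMat j (Γ' i) z =
      pdMat j (pdMat i A) z + pdMat j (Γ i) z * A z + Γ i z * pdMat j A z
        - pdMat j A z * Γ' i z := by
    have h := pdMat_congr_on hU hz (hgauge i) j
    rw [pdMat_mul hdA ((hΓ' i).differentiableAt hU hz),
      pdMat_add ((hA.pdMat hU i).differentiableAt hU hz)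
        (((hΓ i).mul hA).differentiableAt hU hz),
      pdMat_mul ((hΓ i).differentiableAt hU hz) hdA] at h
    rw [add_assoc, ← h]
    abel
  have hmul (i : Fin 2) : A z * Γ' i z = pdMat i A z + Γ i z * A z := hgauge i z hz
  simp only [curvatureMat, Matrix.mul_add, Matrix.mul_sub, ← Matrix.mul_assoc, hpd, hmul]
  simp only [Matrix.add_mul, Matrix.mul_assoc, hmul, pdMat_pdMat_comm hA hU hz i j]
  noncomm_ring

theorem transpose_mul_curvatureMat (hU : IsOpen U) (hg : SmoothMatOn g U)
    (hΓ : ∀ i, SmoothMatOn (Γ i) U) (hsymm : (g z).IsSymm)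
    (hcompat : ∀ i, ∀ w ∈ U, pdMat i g w = (Γ i w)ᵀ * g w + g w * Γ i w) (hz : z ∈ U)
    (i j : Fin 2) : (g z * curvatureMat Γ i j z)ᵀ = -(g z * curvatureMat Γ i j z) := by
  have hdg := hg.differentiableAt hU hz
  have hpd (i j : Fin 2) : pdMat i (pdMat j g) z =
      (pdMat i (Γ j) z)ᵀ * g z + (Γ j z)ᵀ * pdMat i g z
        + (pdMat i g z * Γ j z + g z * pdMat i (Γ j) z) := by
    rw [pdMat_congr_on hU hz (hcompat j) i,
      pdMat_add (((hΓ j).transpose.mul hg).differentiableAt hU hz)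
        ((hg.mul (hΓ j)).differentiableAt hU hz),
      pdMat_mul ((hΓ j).transpose.differentiableAt hU hz) hdg,
      pdMat_mul hdg ((hΓ j).differentiableAt hU hz), pdMat_transpose]
  rw [eq_neg_iff_add_eq_zero, Matrix.transpose_mul, hsymm.eq]
  calc (curvatureMat Γ i j z)ᵀ * g z + g z * curvatureMat Γ i j z
      = pdMat i (pdMat j g) z - pdMat j (pdMat i g) z := by
        rw [hpd, hpd, hcompat i z hz, hcompat j z hz]
        simp only [curvatureMat, Matrix.transpose_add, Matrix.transpose_sub, Matrix.transpose_mul]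
        noncomm_ring
    _ = 0 := sub_eq_zero.mpr (pdMat_pdMat_comm hg hU hz i j)

theorem transpose_mul_mul_apply_zero_one {R : Type*} [CommRing R] [IsAddTorsionFree R]
    (A S : Matrix (Fin 2) (Fin 2) R) (hS : Sᵀ = -S) :
    (Aᵀ * S * A) 0 1 = A.det * S 0 1 := by
  have hS00 : S 0 0 = 0 := self_eq_neg.mp (congrFun (congrFun hS 0) 0)
  have hS11 : S 1 1 = 0 := self_eq_neg.mp (congrFun (congrFun hS 1) 1)
  have hS10 : S 1 0 = -S 0 1 := congrFun (congrFun hS 0) 1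
  simp only [Matrix.mul_apply, Matrix.transpose_apply, Fin.sum_univ_two, Matrix.det_fin_two,
    hS00, hS11, hS10]
  ring

end Curvature

section Rescaling

variable {U : Set ℂ} {g A : ℂ → Matrix (Fin 2) (Fin 2) ℝ} {z : ℂ}

theorem IsMetricOn.transpose_mul_mul (hg : IsMetricOn g U) (hA : SmoothMatOn A U)
    (hdet : ∀ z ∈ U, (A z).det ≠ 0) : IsMetricOn (fun w => (A w)ᵀ * g w * A w) U where
  smooth := (hA.transpose.mul hg.smooth).mul hA
  symm z hz := by
    simp only [Matrix.IsSymm, Matrix.transpose_mul, Matrix.transpose_transpose,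
      (hg.symm z hz).eq, Matrix.mul_assoc]
  posdef z hz := by
    simpa using (hg.posdef z hz).conjTranspose_mul_mul_same (Matrix.mulVec_injective_of_isUnit
      ((Matrix.isUnit_iff_isUnit_det _).mpr (isUnit_iff_ne_zero.mpr (hdet z hz))))

theorem IsMetricOn.smoothMatOn_christoffelMat (hg : IsMetricOn g U) (hU : IsOpen U) (i : Fin 2) :
    SmoothMatOn (christoffelMat g i) U :=
  hg.smooth.christoffelMat hU (fun _ hw => hg.det_ne_zero hw) i

theorem curvatureMat_transpose_mul_mul (hg : IsMetricOn g U) (hA : SmoothMatOn A U)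
    (hcodazzi : IsCodazziOn g A U) (hU : IsOpen U) (hdet : ∀ z ∈ U, (A z).det ≠ 0) (hz : z ∈ U)
    (i j : Fin 2) :
    A z * curvatureMat (christoffelMat fun w => (A w)ᵀ * g w * A w) i j z =
      curvatureMat (christoffelMat g) i j z * A z := by
  refine mul_curvatureMat_of_gauge hU hA (hg.smoothMatOn_christoffelMat hU)
    ((hg.transpose_mul_mul hA hdet).smoothMatOn_christoffelMat hU) (fun i w hw => ?_) hz i j
  rw [christoffelMat_transpose_mul_mul hg hA hcodazzi hU (hdet w hw) hw,
    mul_gaugeChristoffelMat (hdet w hw), covDerivMat]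

theorem gaussK_transpose_mul_mul (hg : IsMetricOn g U) (hA : SmoothMatOn A U)
    (hcodazzi : IsCodazziOn g A U) (hU : IsOpen U) (hdet : ∀ z ∈ U, (A z).det ≠ 0)
    (hz : z ∈ U) :
    gaussK (fun w => (A w)ᵀ * g w * A w) z = gaussK g z / (A z).det := by
  have hh := hg.transpose_mul_mul hA hdet
  have hskew := transpose_mul_curvatureMat hU hg.smooth (hg.smoothMatOn_christoffelMat hU)
    (hg.symm z hz) (fun i w hw => hg.pdMat_eq_christoffelMat hU hw i) hz 0 1
  set h : ℂ → Matrix (Fin 2) (Fin 2) ℝ := fun w => (A w)ᵀ * g w * A w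
  have hlower : (h z)ᵀ * curvatureMat (christoffelMat h) 0 1 z
      = (A z)ᵀ * (g z * curvatureMat (christoffelMat g) 0 1 z) * A z := by
    rw [(hh.symm z hz).eq, Matrix.mul_assoc,
      curvatureMat_transpose_mul_mul hg hA hcodazzi hU hdet hz]
    simp only [Matrix.mul_assoc]
  rw [gaussK_eq_curvatureMat, gaussK_eq_curvatureMat, hlower,
    transpose_mul_mul_apply_zero_one _ _ hskew, (hg.symm z hz).eq, Matrix.det_mul,
    Matrix.det_mul, Matrix.det_transpose]
  field_simp [hdet z hz]

end Rescaling

/-- **Lemma 2.6 (Krasnov–Schlenker)**. Let `g` be a Riemannian metric on a surface and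
`A` a smooth Codazzi `(1,1)`-tensor whose determinant vanishes nowhere, and let
`h = g(A·,A·)`. Then the Levi-Civita connections are related by
`∇^h_X Y = A⁻¹ ∇^g_X (A(Y))`, and the Gaussian curvatures by `K_h = K_g / det A`. -/
theorem stmt_2 (U : Set ℂ) (hU : IsOpen U)
    (g A : ℂ → Matrix (Fin 2) (Fin 2) ℝ)
    (hg : IsMetricOn g U) (hA : SmoothMatOn A U)
    (hcodazzi : IsCodazziOn g A U) (hdet : ∀ z ∈ U, (A z).det ≠ 0)
    (h : ℂ → Matrix (Fin 2) (Fin 2) ℝ) (hh : ∀ z, h z = (A z)ᵀ * g z * A z) :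
    (∀ z ∈ U, ∀ X Y : ℂ → Fin 2 → ℝ,
      (∀ k, DifferentiableAt ℝ (fun w => Y w k) z) →
      (fun k => covVec h X Y k z) =
        (A z)⁻¹.mulVec (fun k => covVec g X (fun w => (A w).mulVec (Y w)) k z)) ∧
    (∀ z ∈ U, gaussK h z = gaussK g z / (A z).det) := by
  obtain rfl : h = fun w => (A w)ᵀ * g w * A w := funext hh
  exact ⟨fun z hz X Y hY => covVec_transpose_mul_mul hg hA hcodazzi hU (hdet z hz) hz X Y hY,
    fun z hz => gaussK_transpose_mul_mul hg hA hcodazzi hU hdet hz⟩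

end
end

section
/- Let U ⊂ 𝕊² ⊂ ℝ³ be an open subset of the unit sphere and let u : U → ℝ be smooth. Define σ : U → ℝ³ by σ(x) = grad^{𝕊²}u(x) + u(x)·x. Then for every x ∈ U and every v ∈ T_x𝕊², the ambient derivative satisfies D_v σ = ∇^{𝕊²}_v grad^{𝕊²}u + u v = b(v), where b = ∇^{𝕊²}_• grad^{𝕊²}u + u𝟙. Consequently, if b is positive definite on U, then σ is an immersion whose unit normal at x is x itself (so its Gauss map is the inclusion U ↪ 𝕊²), whose first fundamental form is g_{𝕊²}(b·,b·), and whose shape operator is b^{-1}. -/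
/-!
Write `∇u` for the ambient gradient. Along a tangent vector `v` at a unit vector `x`, the product
rule gives `D_v σ = D_v(grad^{𝕊²}u) + du(v) x + u v`. Differentiating
`grad^{𝕊²}u = ∇u - ⟪∇u, x⟫ x` shows that the normal component of `D_v(grad^{𝕊²}u)` is
`-⟪∇u, v⟫ = -du(v)`, the second fundamental form `-⟪·,·⟫` of the sphere at work. This cancels
`du(v) x`, so `D_v σ = b(v)` is tangent, and the remaining claims are read off from this identity.
-/

open scoped RealInnerProductSpace

noncomputable section

local notation "E3" => EuclideanSpace ℝ (Fin 3)

section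

open InnerProductSpace

variable {F : Type*} [NormedAddCommGroup F] [InnerProductSpace ℝ F]

theorem ContDiffAt.differentiableAt_gradient [CompleteSpace F] {u : F → ℝ} {x : F}
    {n : WithTop ℕ∞} (hu : ContDiffAt ℝ n u x) (hn : 2 ≤ n) :
    DifferentiableAt ℝ (gradient u) x := by
  have hgrad : gradient u = (toDual ℝ F).symm ∘ fderiv ℝ u := by
    ext1 y
    simp [gradient]
  rw [hgrad]
  exact (toDual ℝ F).symm.toContinuousLinearEquiv.differentiableAt.comp x
    ((hu.fderiv_right (m := 1) hn).differentiableAt one_ne_zero)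

theorem fderiv_sub_inner_smul_self_apply {f : F → F} {x : F} (hf : DifferentiableAt ℝ f x)
    (v : F) :
    fderiv ℝ (fun y => f y - ⟪f y, y⟫ • y) x v =
      fderiv ℝ f x v - ⟪f x, x⟫ • v - (⟪f x, v⟫ + ⟪fderiv ℝ f x v, x⟫) • x := by
  have hderiv : HasFDerivAt (fun y => f y - ⟪f y, y⟫ • y) _ x :=
    hf.hasFDerivAt.sub ((hf.hasFDerivAt.inner ℝ (hasFDerivAt_id x)).smul (hasFDerivAt_id x))
  rw [hderiv.fderiv]
  simp only [sub_apply, add_apply,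
    smul_apply, ContinuousLinearMap.smulRight_apply,
    ContinuousLinearMap.comp_apply, ContinuousLinearMap.prod_apply, ContinuousLinearMap.id_apply,
    fderivInnerCLM_apply, id_eq]
  module

variable [CompleteSpace F] {u : F → ℝ} {x v : F}

/-- On the unit sphere this is the tangential part of the ambient gradient, `grad^{𝕊²}u`. -/
def sphereGradient (u : F → ℝ) (x : F) : F := gradient u x - ⟪gradient u x, x⟫ • x

theorem DifferentiableAt.sphereGradient (hu : DifferentiableAt ℝ (gradient u) x) :
    DifferentiableAt ℝ (sphereGradient u) x :=
  hu.fun_sub ((hu.inner ℝ differentiableAt_fun_id).fun_smul differentiableAt_fun_id)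

theorem inner_fderiv_sphereGradient_self (hu : DifferentiableAt ℝ (gradient u) x)
    (hx : ‖x‖ = 1) (hv : ⟪v, x⟫ = 0) :
    ⟪fderiv ℝ (sphereGradient u) x v, x⟫ = -fderiv ℝ u x v := by
  unfold sphereGradient
  rw [fderiv_sub_inner_smul_self_apply hu, ← inner_gradient_left]
  simp only [inner_sub_left, real_inner_smul_left, inner_self_eq_one_of_norm_eq_one hx, hv]
  ring

theorem fderiv_sphereGradient_add_smul_self_apply (hu : ContDiffAt ℝ 2 u x) (hx : ‖x‖ = 1)
    (hv : ⟪v, x⟫ = 0) :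
    fderiv ℝ (fun y => sphereGradient u y + u y • y) x v =
      fderiv ℝ (sphereGradient u) x v - ⟪fderiv ℝ (sphereGradient u) x v, x⟫ • x + u x • v := by
  have hgrad := hu.differentiableAt_gradient le_rfl
  have hderiv : HasFDerivAt (fun y => sphereGradient u y + u y • y) _ x :=
    hgrad.sphereGradient.hasFDerivAt.add
      ((hu.differentiableAt two_ne_zero).hasFDerivAt.smul (hasFDerivAt_id x))
  rw [hderiv.fderiv, inner_fderiv_sphereGradient_self hgrad hx hv]
  simp only [add_apply, smul_apply,
    ContinuousLinearMap.smulRight_apply, ContinuousLinearMap.id_apply]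
  module

end

/-- **Step 1 of the proof of Proposition 4.2.** Let `U` be an open subset of the unit sphere
`𝕊² ⊂ ℝ³` and `u` a smooth function near `U`.  Define `σ(x) = grad^{𝕊²}u(x) + u(x)·x`, where
`grad^{𝕊²}u(x)` is the tangential part of the ambient gradient.  Then for every `x ∈ U` and
tangent `v` one has `D_v σ = ∇^{𝕊²}_v grad^{𝕊²}u + u v = b(v)`, where
`b = ∇^{𝕊²}_• grad^{𝕊²}u + u 𝟙` (the tangential projection of the ambient derivative).
Consequently, if `b` is positive definite on `U`, then `σ` is an immersion whose unit normal
at `x` is `x` itself (its Gauss map is the inclusion `U ↪ 𝕊²`), whose first fundamental form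
is `g_{𝕊²}(b·,b·)`, and whose shape operator is `b⁻¹`. -/
theorem stmt_18
    (V : Set E3) (hV : IsOpen V)
    (U : Set E3) (hU : U = V ∩ Metric.sphere (0 : E3) 1)
    (u : E3 → ℝ) (hu : ContDiffOn ℝ (⊤ : ℕ∞) u V)
    (gradS : E3 → E3)
    (hgradS : ∀ x, gradS x = gradient u x - ⟪gradient u x, x⟫ • x)
    (σ : E3 → E3) (hσ : ∀ x, σ x = gradS x + u x • x)
    (b : E3 → E3 → E3)
    (hb : ∀ x v, b x v =
      (fderiv ℝ gradS x v - ⟪fderiv ℝ gradS x v, x⟫ • x) + u x • v) :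
    (∀ x ∈ U, ∀ v : E3, ⟪v, x⟫ = 0 → fderiv ℝ σ x v = b x v) ∧
    ((∀ x ∈ U, ∀ v : E3, ⟪v, x⟫ = 0 → v ≠ 0 → 0 < ⟪b x v, v⟫) →
      (∀ x ∈ U, ∀ v : E3, ⟪v, x⟫ = 0 → fderiv ℝ σ x v = 0 → v = 0) ∧
      (∀ x ∈ U, ‖x‖ = 1 ∧ ∀ v : E3, ⟪v, x⟫ = 0 → ⟪fderiv ℝ σ x v, x⟫ = 0) ∧
      (∀ x ∈ U, ∀ v w : E3, ⟪v, x⟫ = 0 → ⟪w, x⟫ = 0 →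
        ⟪fderiv ℝ σ x v, fderiv ℝ σ x w⟫ = ⟪b x v, b x w⟫) ∧
      (∀ x ∈ U, ∀ v w : E3, ⟪v, x⟫ = 0 → ⟪w, x⟫ = 0 → b x w = v →
        fderiv ℝ σ x w = v)) := by
  obtain rfl : gradS = sphereGradient u := funext hgradS
  have hmemU : ∀ x ∈ U, x ∈ V ∧ ‖x‖ = 1 := fun x hx => by
    rw [hU, Set.mem_inter_iff, mem_sphere_zero_iff_norm] at hx
    exact hx
  have hDσ : ∀ x ∈ U, ∀ v : E3, ⟪v, x⟫ = 0 → fderiv ℝ σ x v = b x v := by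
    intro x hx v hv
    rw [funext hσ, hb]
    exact fderiv_sphereGradient_add_smul_self_apply
      ((hu.contDiffAt (hV.mem_nhds (hmemU x hx).1)).of_le (by norm_cast)) (hmemU x hx).2 hv
  refine ⟨hDσ, fun hpos => ⟨?_, ?_, ?_, ?_⟩⟩
  · intro x hx v hv h0
    by_contra hne
    simpa [← hDσ x hx v hv, h0] using hpos x hx v hv hne
  · intro x hx
    have hxx : ⟪x, x⟫ = 1 := inner_self_eq_one_of_norm_eq_one (hmemU x hx).2
    refine ⟨(hmemU x hx).2, fun v hv => ?_⟩
    rw [hDσ x hx v hv, hb]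
    simp only [inner_add_left, inner_sub_left, real_inner_smul_left, hxx, hv]
    ring
  · intro x hx v w hv hw
    rw [hDσ x hx v hv, hDσ x hx w hw]
  · intro x hx v w hv hw hbw
    rw [hDσ x hx w hw, hbw]

end
end
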